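/- arXiv:2102.03562 — 7 statements merged into one kernel-verified Lean document; each statement's English description precedes it below -/
import Mathlib

section
/- Assume ⟨·,·⟩ is nondegenerate on g and g = l + σ(l) (every element of g is of the form Y + σ(Z) with Y, Z ∈ l). Then for every ν ∈ ℝ and every X ∈ l(ν), one has [X, σX] = 0; consequently, for ν ≠ 1, also [ρ⁺(X), ρ⁻(X)] = 0. -/
/-!
For `X ∈ l(ν)` and `Y ∈ l`, invariance gives
`⟨[X, σX], Y⟩ = -⟨σX, [X, Y]⟩ = -ν ⟨X, [X, Y]⟩ = ν ⟨[X, X], Y⟩ = 0`, so `[X, σX] ⊥ l`.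
Since `σ[X, σX] = [σX, X] = -[X, σX]` and `σ` is an isometry, `[X, σX]` is also orthogonal to
`σ(l)`, hence to `l + σ(l) = g`, and nondegeneracy forces `[X, σX] = 0`. The bracket
`[ρ⁺(X), ρ⁻(X)]` is a multiple of `[X, σX]`.
-/

section InvariantForm

variable {R L : Type*} [CommRing R] [LieRing L] [LieAlgebra R L] {B : LinearMap.BilinForm R L}

theorem apply_lie_right_self_eq_zero (hB : ∀ X Y Z : L, B ⁅X, Y⁆ Z = -B Y ⁅X, Z⁆) (X Y : L) :
    B X ⁅X, Y⁆ = 0 := by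
  simpa using (hB X X Y).symm

theorem apply_lie_eq_zero_of_apply_eq_mul (hB : ∀ X Y Z : L, B ⁅X, Y⁆ Z = -B Y ⁅X, Z⁆)
    {l : LieSubalgebra R L} {ν : R} {X Z : L} (hX : X ∈ l) (hZ : ∀ Y ∈ l, B Z Y = ν * B X Y)
    {Y : L} (hY : Y ∈ l) : B ⁅X, Z⁆ Y = 0 := by
  rw [hB, hZ _ (l.lie_mem hX hY), apply_lie_right_self_eq_zero hB, mul_zero, neg_zero]

theorem apply_map_eq_neg_apply_of_map_eq_neg {σ : L →ₗ[R] L}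
    (hσB : ∀ X Y : L, B (σ X) (σ Y) = B X Y) {W : L} (hW : σ W = -W) (Z : L) :
    B W (σ Z) = -B W Z := by
  rw [← hσB W Z, hW, map_neg, LinearMap.neg_apply, neg_neg]

theorem lie_map_self_eq_zero_of_apply_eq_mul
    (hB : ∀ X Y Z : L, B ⁅X, Y⁆ Z = -B Y ⁅X, Z⁆) {σ : L →ₗ[R] L}
    (hσbr : ∀ X Y : L, σ ⁅X, Y⁆ = ⁅σ X, σ Y⁆) (hσinv : ∀ X : L, σ (σ X) = X)
    (hσB : ∀ X Y : L, B (σ X) (σ Y) = B X Y) {l : LieSubalgebra R L}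
    (hBnondeg : ∀ X : L, (∀ Y : L, B X Y = 0) → X = 0)
    (hdec : ∀ X : L, ∃ Y ∈ l, ∃ Z ∈ l, X = Y + σ Z)
    {ν : R} {X : L} (hX : X ∈ l) (hνX : ∀ Y ∈ l, B (σ X) Y = ν * B X Y) :
    ⁅X, σ X⁆ = 0 := by
  have horth : ∀ Y ∈ l, B ⁅X, σ X⁆ Y = 0 := fun Y hY ↦
    apply_lie_eq_zero_of_apply_eq_mul hB hX hνX hY
  have hanti : σ ⁅X, σ X⁆ = -⁅X, σ X⁆ := by rw [hσbr, hσinv, ← lie_skew]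
  refine hBnondeg _ fun W ↦ ?_
  obtain ⟨Y, hY, Z, hZ, rfl⟩ := hdec W
  rw [map_add, apply_map_eq_neg_apply_of_map_eq_neg hσB hanti, horth Y hY, horth Z hZ,
    neg_zero, add_zero]

theorem lie_smul_add_smul_sub_eq_zero {X Y : L} (h : ⁅X, Y⁆ = 0) (a b : R) :
    ⁅a • (X + Y), b • (X - Y)⁆ = 0 := by
  have h' : ⁅Y, X⁆ = 0 := by rw [← lie_skew, h, neg_zero]
  simp only [lie_smul, smul_lie, add_lie, lie_sub, lie_self, h, h', sub_self,
    add_zero, smul_zero]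

end InvariantForm

theorem statement6_general
    {g : Type*} [LieRing g] [LieAlgebra ℝ g]
    (B : LinearMap.BilinForm ℝ g)
    (hBinv : ∀ X Y Z : g, B ⁅X, Y⁆ Z = - B Y ⁅X, Z⁆)
    (σ : g →ₗ[ℝ] g)
    (hσbr : ∀ X Y : g, σ ⁅X, Y⁆ = ⁅σ X, σ Y⁆)
    (hσinv : ∀ X : g, σ (σ X) = X)
    (hσB : ∀ X Y : g, B (σ X) (σ Y) = B X Y)
    (l : LieSubalgebra ℝ g)
    (hBnondeg : ∀ X : g, (∀ Y : g, B X Y = 0) → X = 0)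
    (hdec : ∀ X : g, ∃ Y ∈ l, ∃ Z ∈ l, X = Y + σ Z) :
    ∀ (ν : ℝ) (X : g), X ∈ l → (∀ Y ∈ l, B (σ X) Y = ν * B X Y) →
      ⁅X, σ X⁆ = (0 : g) ∧
      (ν ≠ 1 →
        ⁅((((1 - ν) / 2) ^ (-(1/2) : ℝ) / 2 : ℝ)) • (X + σ X),
          ((((1 - ν) / 2) ^ (-(1/2) : ℝ) / 2 : ℝ)) • (X - σ X)⁆ = (0 : g)) := by
  intro ν X hX hνX
  have hcomm : ⁅X, σ X⁆ = 0 :=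
    lie_map_self_eq_zero_of_apply_eq_mul hBinv hσbr hσinv hσB hBnondeg hdec hX hνX
  exact ⟨hcomm, fun _ ↦ lie_smul_add_smul_sub_eq_zero hcomm _ _⟩

/-- Assume `⟨·,·⟩` is nondegenerate on `g` and `g = l + σ(l)`. Then for every
`ν ∈ ℝ` and every `X ∈ l(ν)` one has `[X, σX] = 0`; consequently, for `ν ≠ 1`, also
`[ρ⁺(X), ρ⁻(X)] = 0`, where `ρ±(X) = (d_ν/2)(X ± σX)` and `d_ν = ((1−ν)/2)^(−1/2)`. -/
theorem statement6
    {g : Type*} [LieRing g] [LieAlgebra ℝ g] [FiniteDimensional ℝ g]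
    (B : LinearMap.BilinForm ℝ g)
    (hBsymm : ∀ X Y : g, B X Y = B Y X)
    (hBinv : ∀ X Y Z : g, B ⁅X, Y⁆ Z = - B Y ⁅X, Z⁆)
    (σ : g →ₗ[ℝ] g)
    (hσbr : ∀ X Y : g, σ ⁅X, Y⁆ = ⁅σ X, σ Y⁆)
    (hσinv : ∀ X : g, σ (σ X) = X)
    (hσB : ∀ X Y : g, B (σ X) (σ Y) = B X Y)
    (l : LieSubalgebra ℝ g)
    (hBnondeg : ∀ X : g, (∀ Y : g, B X Y = 0) → X = 0)
    (hdec : ∀ X : g, ∃ Y ∈ l, ∃ Z ∈ l, X = Y + σ Z) :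
    ∀ (ν : ℝ) (X : g), X ∈ l → (∀ Y ∈ l, B (σ X) Y = ν * B X Y) →
      ⁅X, σ X⁆ = (0 : g) ∧
      (ν ≠ 1 →
        ⁅((((1 - ν) / 2) ^ (-(1/2) : ℝ) / 2 : ℝ)) • (X + σ X),
          ((((1 - ν) / 2) ^ (-(1/2) : ℝ) / 2 : ℝ)) • (X - σ X)⁆ = (0 : g)) :=
  statement6_general B hBinv σ hσbr hσinv hσB l hBnondeg hdec
end

section
/- For X ∈ l(ν), Y ∈ l(ν') and Z ∈ l(ν''), one has ω(X + σX, Y − σY, Z − σZ) = 2(1 + ν − ν' − ν'')·ω(X, Y, Z), where ω(A,B,C) := ⟨[A,B],C⟩. -/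
/-!
Expanding `⁅X + σX, Y - σY⁆ (Z - σZ)` gives eight terms `B ⁅σᵃX, σᵇY⁆ (σᶜZ)`. Since `σ` is a
`B`-isometric involutive automorphism, applying `σ` to all three arguments turns every term with two
or three `σ`'s into one with one or none. A single `σ` can be moved, by invariance and symmetry of `B`,
onto an element of `l` paired against a bracket of the other two (which again lies in `l`), where it
becomes the corresponding eigenvalue. Collecting the terms gives `2 (1 + ν - ν' - ν'') ω(X, Y, Z)`.
-/

section

variable {R L : Type*} [CommRing R] [LieRing L] [LieAlgebra R L] {B : LinearMap.BilinForm R L}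

theorem apply_lie_eq_apply_lie_of_invariant (hBinv : ∀ X Y Z : L, B ⁅X, Y⁆ Z = -B Y ⁅X, Z⁆)
    (X Y Z : L) : B ⁅X, Y⁆ Z = B X ⁅Y, Z⁆ := by
  have h := hBinv Y X Z
  rw [← lie_skew, map_neg, LinearMap.neg_apply] at h
  exact neg_inj.mp h

theorem apply_lie_map_map_map {σ : L →ₗ[R] L} (hσbr : ∀ X Y : L, σ ⁅X, Y⁆ = ⁅σ X, σ Y⁆)
    (hσB : ∀ X Y : L, B (σ X) (σ Y) = B X Y) (X Y Z : L) :
    B ⁅σ X, σ Y⁆ (σ Z) = B ⁅X, Y⁆ Z := by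
  rw [← hσbr, hσB]

variable {σ : L →ₗ[R] L} {l : LieSubalgebra R L} {X Y Z : L}

theorem apply_lie_map_left_of_eigen (hBinv : ∀ X Y Z : L, B ⁅X, Y⁆ Z = -B Y ⁅X, Z⁆) {ν : R}
    (hXν : ∀ W ∈ l, B (σ X) W = ν * B X W) (hYl : Y ∈ l) (hZl : Z ∈ l) :
    B ⁅σ X, Y⁆ Z = ν * B ⁅X, Y⁆ Z := by
  rw [apply_lie_eq_apply_lie_of_invariant hBinv, apply_lie_eq_apply_lie_of_invariant hBinv,
    hXν _ (l.lie_mem hYl hZl)]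

theorem apply_lie_map_mid_of_eigen (hBinv : ∀ X Y Z : L, B ⁅X, Y⁆ Z = -B Y ⁅X, Z⁆) {ν : R}
    (hYν : ∀ W ∈ l, B (σ Y) W = ν * B Y W) (hXl : X ∈ l) (hZl : Z ∈ l) :
    B ⁅X, σ Y⁆ Z = ν * B ⁅X, Y⁆ Z := by
  rw [hBinv, hBinv X Y, hYν _ (l.lie_mem hXl hZl), mul_neg]

theorem apply_lie_map_right_of_eigen (hBsymm : ∀ X Y : L, B X Y = B Y X) {ν : R}
    (hZν : ∀ W ∈ l, B (σ Z) W = ν * B Z W) (hXl : X ∈ l) (hYl : Y ∈ l) :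
    B ⁅X, Y⁆ (σ Z) = ν * B ⁅X, Y⁆ Z := by
  rw [hBsymm, hZν _ (l.lie_mem hXl hYl), hBsymm Z]

end

theorem statement10_general
    {g : Type*} [LieRing g] [LieAlgebra ℝ g]
    (B : LinearMap.BilinForm ℝ g)
    (hBsymm : ∀ X Y : g, B X Y = B Y X)
    (hBinv : ∀ X Y Z : g, B ⁅X, Y⁆ Z = - B Y ⁅X, Z⁆)
    (σ : g →ₗ[ℝ] g)
    (hσbr : ∀ X Y : g, σ ⁅X, Y⁆ = ⁅σ X, σ Y⁆)
    (hσinv : ∀ X : g, σ (σ X) = X)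
    (hσB : ∀ X Y : g, B (σ X) (σ Y) = B X Y)
    (l : LieSubalgebra ℝ g)
    (ν ν' ν'' : ℝ) (X Y Z : g)
    (hXl : X ∈ l) (hXν : ∀ W ∈ l, B (σ X) W = ν * B X W)
    (hYl : Y ∈ l) (hYν : ∀ W ∈ l, B (σ Y) W = ν' * B Y W)
    (hZl : Z ∈ l) (hZν : ∀ W ∈ l, B (σ Z) W = ν'' * B Z W) :
    B ⁅X + σ X, Y - σ Y⁆ (Z - σ Z) = 2 * (1 + ν - ν' - ν'') * B ⁅X, Y⁆ Z := by
  have hσσσ := apply_lie_map_map_map hσbr hσB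
  have hXσYσZ := hσσσ (σ X) Y Z
  have hσXYσZ := hσσσ X (σ Y) Z
  have hσXσYZ := hσσσ X Y (σ Z)
  rw [hσinv] at hXσYσZ hσXYσZ hσXσYZ
  have hσX := apply_lie_map_left_of_eigen hBinv hXν hYl hZl
  have hσY := apply_lie_map_mid_of_eigen hBinv hYν hXl hZl
  have hσZ := apply_lie_map_right_of_eigen hBsymm hZν hXl hYl
  simp only [add_lie, lie_sub, map_add, map_sub, LinearMap.add_apply, LinearMap.sub_apply]
  rw [hXσYσZ, hσXYσZ, hσXσYZ, hσX, hσY, hσZ, hσσσ]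
  ring

/-- For `X ∈ l(ν)`, `Y ∈ l(ν')` and `Z ∈ l(ν'')`, one has
`ω(X + σX, Y − σY, Z − σZ) = 2(1 + ν − ν' − ν'')·ω(X, Y, Z)`,
where `ω(A,B,C) = ⟨[A,B],C⟩`. -/
theorem statement10
    {g : Type*} [LieRing g] [LieAlgebra ℝ g] [FiniteDimensional ℝ g]
    (B : LinearMap.BilinForm ℝ g)
    (hBsymm : ∀ X Y : g, B X Y = B Y X)
    (hBinv : ∀ X Y Z : g, B ⁅X, Y⁆ Z = - B Y ⁅X, Z⁆)
    (σ : g →ₗ[ℝ] g)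
    (hσbr : ∀ X Y : g, σ ⁅X, Y⁆ = ⁅σ X, σ Y⁆)
    (hσinv : ∀ X : g, σ (σ X) = X)
    (hσB : ∀ X Y : g, B (σ X) (σ Y) = B X Y)
    (l : LieSubalgebra ℝ g)
    (ν ν' ν'' : ℝ) (X Y Z : g)
    (hXl : X ∈ l) (hXν : ∀ W ∈ l, B (σ X) W = ν * B X W)
    (hYl : Y ∈ l) (hYν : ∀ W ∈ l, B (σ Y) W = ν' * B Y W)
    (hZl : Z ∈ l) (hZν : ∀ W ∈ l, B (σ Z) W = ν'' * B Z W) :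
    B ⁅X + σ X, Y - σ Y⁆ (Z - σ Z) = 2 * (1 + ν - ν' - ν'') * B ⁅X, Y⁆ Z :=
  statement10_general B hBsymm hBinv σ hσbr hσinv hσB l ν ν' ν'' X Y Z hXl hXν hYl hYν hZl hZν
end

section
/- For all ν, ν', ν'' ≠ 1 and all X ∈ l(ν), Y ∈ l(ν'), Z ∈ l(ν''), one has ω(ρ⁺(X), ρ⁻(Y), ρ⁻(Z)) = (1/4)·d_ν·d_{ν'}·d_{ν''}·(1 + ν − ν' − ν'')·ω(X, Y, Z), where ω(A,B,C) := ⟨[A,B],C⟩. -/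
/-!
Since `σ` is an isometric involutive automorphism and `⟨·,·⟩` is invariant, moving `σ` between
the three slots of `ω` is free: `ω(σA, σC, D) = ω(A, C, σD)`. On `l`, applying `σ` to a single
slot of `ω(X, Y, Z)` multiplies it by that slot's eigenvalue, so each of the eight terms of
`ω(X + σX, Y − σY, Z − σZ)` is a multiple of `ω(X, Y, Z)`; they add up to
`2(1 + ν − ν' − ν'')`.
-/

section Invariance

variable {R L : Type*} [CommRing R] [LieRing L] [LieAlgebra R L]
  {B : LinearMap.BilinForm R L} {σ : L →ₗ[R] L}

theorem bilin_lie_left_eq_lie_right (hBsymm : ∀ X Y : L, B X Y = B Y X)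
    (hBinv : ∀ X Y Z : L, B ⁅X, Y⁆ Z = - B Y ⁅X, Z⁆) (A C D : L) :
    B ⁅A, C⁆ D = B A ⁅C, D⁆ := by
  rw [hBsymm, ← lie_skew A C, map_neg, ← hBinv, hBsymm]

theorem bilin_map_left_eq_map_right (hσinv : ∀ X : L, σ (σ X) = X)
    (hσB : ∀ X Y : L, B (σ X) (σ Y) = B X Y) (A C : L) :
    B (σ A) C = B A (σ C) := by
  rw [← hσB A (σ C), hσinv]

theorem bilin_lie_map_map (hσbr : ∀ X Y : L, σ ⁅X, Y⁆ = ⁅σ X, σ Y⁆)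
    (hσinv : ∀ X : L, σ (σ X) = X) (hσB : ∀ X Y : L, B (σ X) (σ Y) = B X Y) (A C D : L) :
    B ⁅σ A, σ C⁆ D = B ⁅A, C⁆ (σ D) := by
  rw [← hσbr, bilin_map_left_eq_map_right hσinv hσB]

end Invariance

section Eigen

variable {R L : Type*} [CommRing R] [LieRing L] [LieAlgebra R L]
  {B : LinearMap.BilinForm R L} {σ : L →ₗ[R] L} {l : LieSubalgebra R L}
  {ν ν' ν'' : R} {X Y Z : L}

theorem bilin_lie_map_left_of_eigen (hBsymm : ∀ X Y : L, B X Y = B Y X)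
    (hBinv : ∀ X Y Z : L, B ⁅X, Y⁆ Z = - B Y ⁅X, Z⁆)
    (hXν : ∀ W ∈ l, B (σ X) W = ν * B X W) (hYl : Y ∈ l) (hZl : Z ∈ l) :
    B ⁅σ X, Y⁆ Z = ν * B ⁅X, Y⁆ Z := by
  rw [bilin_lie_left_eq_lie_right hBsymm hBinv, bilin_lie_left_eq_lie_right hBsymm hBinv,
    hXν _ (l.lie_mem hYl hZl)]

theorem bilin_lie_map_mid_of_eigen (hBinv : ∀ X Y Z : L, B ⁅X, Y⁆ Z = - B Y ⁅X, Z⁆)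
    (hYν : ∀ W ∈ l, B (σ Y) W = ν' * B Y W) (hXl : X ∈ l) (hZl : Z ∈ l) :
    B ⁅X, σ Y⁆ Z = ν' * B ⁅X, Y⁆ Z := by
  rw [hBinv, hYν _ (l.lie_mem hXl hZl), hBinv X Y Z, mul_neg]

theorem bilin_lie_map_right_of_eigen (hBsymm : ∀ X Y : L, B X Y = B Y X)
    (hZν : ∀ W ∈ l, B (σ Z) W = ν'' * B Z W) (hXl : X ∈ l) (hYl : Y ∈ l) :
    B ⁅X, Y⁆ (σ Z) = ν'' * B ⁅X, Y⁆ Z := by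
  rw [hBsymm, hZν _ (l.lie_mem hXl hYl), hBsymm]

theorem bilin_lie_add_map_sub_map_sub_map (hBsymm : ∀ X Y : L, B X Y = B Y X)
    (hBinv : ∀ X Y Z : L, B ⁅X, Y⁆ Z = - B Y ⁅X, Z⁆)
    (hσbr : ∀ X Y : L, σ ⁅X, Y⁆ = ⁅σ X, σ Y⁆) (hσinv : ∀ X : L, σ (σ X) = X)
    (hσB : ∀ X Y : L, B (σ X) (σ Y) = B X Y)
    (hXl : X ∈ l) (hXν : ∀ W ∈ l, B (σ X) W = ν * B X W)
    (hYl : Y ∈ l) (hYν : ∀ W ∈ l, B (σ Y) W = ν' * B Y W)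
    (hZl : Z ∈ l) (hZν : ∀ W ∈ l, B (σ Z) W = ν'' * B Z W) :
    B ⁅X + σ X, Y - σ Y⁆ (Z - σ Z) = 2 * (1 + ν - ν' - ν'') * B ⁅X, Y⁆ Z := by
  have hσX := bilin_lie_map_left_of_eigen hBsymm hBinv hXν hYl hZl
  have hσY := bilin_lie_map_mid_of_eigen hBinv hYν hXl hZl
  have hσZ := bilin_lie_map_right_of_eigen hBsymm hZν hXl hYl
  have hmove := bilin_lie_map_map hσbr hσinv hσB
  have hσXσY : B ⁅σ X, σ Y⁆ Z = ν'' * B ⁅X, Y⁆ Z := by rw [hmove, hσZ]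
  have hσXσZ : B ⁅σ X, Y⁆ (σ Z) = ν' * B ⁅X, Y⁆ Z := by
    simpa only [hσinv, hσY] using hmove X (σ Y) (σ Z)
  have hσYσZ : B ⁅X, σ Y⁆ (σ Z) = ν * B ⁅X, Y⁆ Z := by
    simpa only [hσinv, hσX] using hmove (σ X) Y (σ Z)
  have hσXσYσZ : B ⁅σ X, σ Y⁆ (σ Z) = B ⁅X, Y⁆ Z := by rw [hmove, hσinv]
  simp only [add_lie, lie_sub, map_add, map_sub,
    LinearMap.add_apply, LinearMap.sub_apply]
  rw [hσX, hσY, hσZ, hσXσY, hσXσZ, hσYσZ, hσXσYσZ]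
  ring

end Eigen

theorem statement11_general
    {g : Type*} [LieRing g] [LieAlgebra ℝ g]
    (B : LinearMap.BilinForm ℝ g)
    (hBsymm : ∀ X Y : g, B X Y = B Y X)
    (hBinv : ∀ X Y Z : g, B ⁅X, Y⁆ Z = - B Y ⁅X, Z⁆)
    (σ : g →ₗ[ℝ] g)
    (hσbr : ∀ X Y : g, σ ⁅X, Y⁆ = ⁅σ X, σ Y⁆)
    (hσinv : ∀ X : g, σ (σ X) = X)
    (hσB : ∀ X Y : g, B (σ X) (σ Y) = B X Y)
    (l : LieSubalgebra ℝ g)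
    (ν ν' ν'' : ℝ)
    (X Y Z : g)
    (hXl : X ∈ l) (hXν : ∀ W ∈ l, B (σ X) W = ν * B X W)
    (hYl : Y ∈ l) (hYν : ∀ W ∈ l, B (σ Y) W = ν' * B Y W)
    (hZl : Z ∈ l) (hZν : ∀ W ∈ l, B (σ Z) W = ν'' * B Z W) :
    B ⁅((((1 - ν) / 2) ^ (-(1/2) : ℝ) / 2 : ℝ)) • (X + σ X),
        ((((1 - ν') / 2) ^ (-(1/2) : ℝ) / 2 : ℝ)) • (Y - σ Y)⁆
      (((((1 - ν'') / 2) ^ (-(1/2) : ℝ) / 2 : ℝ)) • (Z - σ Z))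
    = 1 / 4 * (((1 - ν) / 2) ^ (-(1/2) : ℝ)) * (((1 - ν') / 2) ^ (-(1/2) : ℝ))
        * (((1 - ν'') / 2) ^ (-(1/2) : ℝ)) * (1 + ν - ν' - ν'') * B ⁅X, Y⁆ Z := by
  simp only [smul_lie, lie_smul, map_smul, LinearMap.smul_apply, smul_eq_mul]
  rw [bilin_lie_add_map_sub_map_sub_map hBsymm hBinv hσbr hσinv hσB hXl hXν hYl hYν hZl hZν]
  ring

/-- For all `ν, ν', ν'' ≠ 1` and all `X ∈ l(ν)`, `Y ∈ l(ν')`, `Z ∈ l(ν'')`,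
one has `ω(ρ⁺(X), ρ⁻(Y), ρ⁻(Z)) = (1/4)·d_ν·d_{ν'}·d_{ν''}·(1 + ν − ν' − ν'')·ω(X, Y, Z)`,
where `ω(A,B,C) = ⟨[A,B],C⟩`, `d_ν = ((1−ν)/2)^(−1/2)`, `ρ⁺(X) = (d_ν/2)(X + σX)` and
`ρ⁻(X) = (d_ν/2)(X − σX)`. -/
theorem statement11
    {g : Type*} [LieRing g] [LieAlgebra ℝ g] [FiniteDimensional ℝ g]
    (B : LinearMap.BilinForm ℝ g)
    (hBsymm : ∀ X Y : g, B X Y = B Y X)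
    (hBinv : ∀ X Y Z : g, B ⁅X, Y⁆ Z = - B Y ⁅X, Z⁆)
    (σ : g →ₗ[ℝ] g)
    (hσbr : ∀ X Y : g, σ ⁅X, Y⁆ = ⁅σ X, σ Y⁆)
    (hσinv : ∀ X : g, σ (σ X) = X)
    (hσB : ∀ X Y : g, B (σ X) (σ Y) = B X Y)
    (l : LieSubalgebra ℝ g)
    (ν ν' ν'' : ℝ) (hν : ν ≠ 1) (hν' : ν' ≠ 1) (hν'' : ν'' ≠ 1)
    (X Y Z : g)
    (hXl : X ∈ l) (hXν : ∀ W ∈ l, B (σ X) W = ν * B X W)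
    (hYl : Y ∈ l) (hYν : ∀ W ∈ l, B (σ Y) W = ν' * B Y W)
    (hZl : Z ∈ l) (hZν : ∀ W ∈ l, B (σ Z) W = ν'' * B Z W) :
    B ⁅((((1 - ν) / 2) ^ (-(1/2) : ℝ) / 2 : ℝ)) • (X + σ X),
        ((((1 - ν') / 2) ^ (-(1/2) : ℝ) / 2 : ℝ)) • (Y - σ Y)⁆
      (((((1 - ν'') / 2) ^ (-(1/2) : ℝ) / 2 : ℝ)) • (Z - σ Z))
    = 1 / 4 * (((1 - ν) / 2) ^ (-(1/2) : ℝ)) * (((1 - ν') / 2) ^ (-(1/2) : ℝ))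
        * (((1 - ν'') / 2) ^ (-(1/2) : ℝ)) * (1 + ν - ν' - ν'') * B ⁅X, Y⁆ Z :=
  statement11_general B hBsymm hBinv σ hσbr hσinv hσB l ν ν' ν'' X Y Z hXl hXν hYl hYν hZl hZν
end

section
/- For all X, Z ∈ l(0) and Y ∈ l(−1), one has ⟨[ρ⁺(X), ρ⁻(Y)], ρ⁻(Z)⟩ = ⟨[X, Y], Z⟩. -/
/-!
Expanding `⟨[X + σX, Y − σY], Z − σZ⟩` gives eight terms, which pair off because `σ` preserves
both the bracket and the form. By invariance, each remaining term with a `σ` can be brought to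
the shape `⟨σA, W⟩` with `A ∈ l(ν)` and `W ∈ l`, so it is `ν ⟨[X, Y], Z⟩`. This gives
`⟨[X + σX, Y − σY], Z − σZ⟩ = 2 (1 − ν_Z − ν_Y + ν_X) ⟨[X, Y], Z⟩`, i.e. `4 ⟨[X, Y], Z⟩` here,
and the constants `d_0² d_{−1} / 8 = 1/4` cancel the factor 4.
-/

section RelEigenset

variable {R L : Type*} [CommRing R] [LieRing L] [LieAlgebra R L]
  {B : LinearMap.BilinForm R L} {σ : L →ₗ[R] L} {l : LieSubalgebra R L}

/-- The space `l(ν)` of the paper. -/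
def relEigenset (B : LinearMap.BilinForm R L) (σ : L →ₗ[R] L) (l : LieSubalgebra R L) (ν : R) :
    Set L :=
  {X | X ∈ l ∧ ∀ W ∈ l, B (σ X) W = ν * B X W}

theorem bilin_lie_add_sigma_sub_sigma (hσbr : ∀ X Y : L, σ ⁅X, Y⁆ = ⁅σ X, σ Y⁆)
    (hσinv : ∀ X : L, σ (σ X) = X) (hσB : ∀ X Y : L, B (σ X) (σ Y) = B X Y) (X Y Z : L) :
    B ⁅X + σ X, Y - σ Y⁆ (Z - σ Z) =
      2 * (B ⁅X, Y⁆ Z - B ⁅X, Y⁆ (σ Z) - B ⁅X, σ Y⁆ Z + B ⁅σ X, Y⁆ Z) := by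
  have hσ : ∀ A C D : L, B ⁅σ A, σ C⁆ (σ D) = B ⁅A, C⁆ D := fun A C D => by rw [← hσbr, hσB]
  have h₁ : B ⁅σ X, σ Y⁆ Z = B ⁅X, Y⁆ (σ Z) := by simpa only [hσinv] using hσ X Y (σ Z)
  have h₂ : B ⁅X, σ Y⁆ (σ Z) = B ⁅σ X, Y⁆ Z := by simpa only [hσinv] using hσ (σ X) Y Z
  have h₃ : B ⁅σ X, Y⁆ (σ Z) = B ⁅X, σ Y⁆ Z := by simpa only [hσinv] using hσ X (σ Y) Z
  simp only [add_lie, lie_sub, map_add, map_sub, LinearMap.add_apply,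
    LinearMap.sub_apply, hσ, h₁, h₂, h₃]
  ring

theorem bilin_apply_sigma_of_mem_relEigenset (hBsymm : ∀ X Y : L, B X Y = B Y X) {ν : R} {Z : L}
    (hZ : Z ∈ relEigenset B σ l ν) {W : L} (hW : W ∈ l) : B W (σ Z) = ν * B W Z := by
  rw [hBsymm, hZ.2 W hW, hBsymm]

theorem bilin_lie_sigma_right_of_mem_relEigenset (hBinv : ∀ X Y Z : L, B ⁅X, Y⁆ Z = - B Y ⁅X, Z⁆)
    {ν : R} {Y : L} (hY : Y ∈ relEigenset B σ l ν) {X Z : L} (hX : X ∈ l) (hZ : Z ∈ l) :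
    B ⁅X, σ Y⁆ Z = ν * B ⁅X, Y⁆ Z := by
  rw [hBinv, hY.2 _ (l.lie_mem hX hZ), hBinv X Y Z]
  ring

theorem bilin_lie_sigma_left_of_mem_relEigenset (hBinv : ∀ X Y Z : L, B ⁅X, Y⁆ Z = - B Y ⁅X, Z⁆)
    {ν : R} {X : L} (hX : X ∈ relEigenset B σ l ν) {Y Z : L} (hY : Y ∈ l) (hZ : Z ∈ l) :
    B ⁅σ X, Y⁆ Z = ν * B ⁅X, Y⁆ Z := by
  rw [← lie_skew, map_neg, LinearMap.neg_apply, hBinv, neg_neg, hX.2 _ (l.lie_mem hY hZ),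
    ← lie_skew X Y, map_neg, LinearMap.neg_apply, hBinv, neg_neg]

theorem bilin_lie_add_sigma_sub_sigma_of_mem_relEigenset (hBsymm : ∀ X Y : L, B X Y = B Y X)
    (hBinv : ∀ X Y Z : L, B ⁅X, Y⁆ Z = - B Y ⁅X, Z⁆) (hσbr : ∀ X Y : L, σ ⁅X, Y⁆ = ⁅σ X, σ Y⁆)
    (hσinv : ∀ X : L, σ (σ X) = X) (hσB : ∀ X Y : L, B (σ X) (σ Y) = B X Y)
    {νX νY νZ : R} {X Y Z : L} (hX : X ∈ relEigenset B σ l νX) (hY : Y ∈ relEigenset B σ l νY)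
    (hZ : Z ∈ relEigenset B σ l νZ) :
    B ⁅X + σ X, Y - σ Y⁆ (Z - σ Z) = 2 * (1 - νZ - νY + νX) * B ⁅X, Y⁆ Z := by
  rw [bilin_lie_add_sigma_sub_sigma hσbr hσinv hσB,
    bilin_apply_sigma_of_mem_relEigenset hBsymm hZ (l.lie_mem hX.1 hY.1),
    bilin_lie_sigma_right_of_mem_relEigenset hBinv hY hX.1 hZ.1,
    bilin_lie_sigma_left_of_mem_relEigenset hBinv hX hY.1 hZ.1]
  ring

end RelEigenset

theorem statement12_general
    {g : Type*} [LieRing g] [LieAlgebra ℝ g]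
    (B : LinearMap.BilinForm ℝ g)
    (hBsymm : ∀ X Y : g, B X Y = B Y X)
    (hBinv : ∀ X Y Z : g, B ⁅X, Y⁆ Z = - B Y ⁅X, Z⁆)
    (σ : g →ₗ[ℝ] g)
    (hσbr : ∀ X Y : g, σ ⁅X, Y⁆ = ⁅σ X, σ Y⁆)
    (hσinv : ∀ X : g, σ (σ X) = X)
    (hσB : ∀ X Y : g, B (σ X) (σ Y) = B X Y)
    (l : LieSubalgebra ℝ g)
    (X Y Z : g)
    (hXl : X ∈ l) (hXν : ∀ W ∈ l, B (σ X) W = 0 * B X W)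
    (hYl : Y ∈ l) (hYν : ∀ W ∈ l, B (σ Y) W = (-1) * B Y W)
    (hZl : Z ∈ l) (hZν : ∀ W ∈ l, B (σ Z) W = 0 * B Z W) :
    B ⁅((((1 - 0) / 2 : ℝ) ^ (-(1/2) : ℝ) / 2 : ℝ)) • (X + σ X),
        ((((1 - (-1)) / 2 : ℝ) ^ (-(1/2) : ℝ) / 2 : ℝ)) • (Y - σ Y)⁆
      (((((1 - 0) / 2 : ℝ) ^ (-(1/2) : ℝ) / 2 : ℝ)) • (Z - σ Z))
    = B ⁅X, Y⁆ Z := by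
  have hd₀ : ((1 - 0) / 2 : ℝ) ^ (-(1/2) : ℝ) * ((1 - 0) / 2 : ℝ) ^ (-(1/2) : ℝ) = 2 := by
    rw [← Real.rpow_add (by norm_num)]
    norm_num
  have hdNeg : ((1 - (-1)) / 2 : ℝ) ^ (-(1/2) : ℝ) = 1 := by norm_num
  rw [smul_lie, lie_smul, map_smul, map_smul, map_smul, LinearMap.smul_apply,
    LinearMap.smul_apply,
    bilin_lie_add_sigma_sub_sigma_of_mem_relEigenset hBsymm hBinv hσbr hσinv hσB
      (l := l) ⟨hXl, hXν⟩ ⟨hYl, hYν⟩ ⟨hZl, hZν⟩, hdNeg]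
  simp only [smul_eq_mul]
  linear_combination (B ⁅X, Y⁆ Z / 2) * hd₀

/-- For all `X, Z ∈ l(0)` and `Y ∈ l(−1)`, one has
`⟨[ρ⁺(X), ρ⁻(Y)], ρ⁻(Z)⟩ = ⟨[X, Y], Z⟩`, where for `X ∈ l(ν)` (`ν ≠ 1`),
`ρ⁺(X) = (d_ν/2)(X + σX)` and `ρ⁻(X) = (d_ν/2)(X − σX)` with `d_ν = ((1−ν)/2)^(−1/2)`
(so `d_0 = √2` and `d_{−1} = 1`). -/
theorem statement12
    {g : Type*} [LieRing g] [LieAlgebra ℝ g] [FiniteDimensional ℝ g]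
    (B : LinearMap.BilinForm ℝ g)
    (hBsymm : ∀ X Y : g, B X Y = B Y X)
    (hBinv : ∀ X Y Z : g, B ⁅X, Y⁆ Z = - B Y ⁅X, Z⁆)
    (σ : g →ₗ[ℝ] g)
    (hσbr : ∀ X Y : g, σ ⁅X, Y⁆ = ⁅σ X, σ Y⁆)
    (hσinv : ∀ X : g, σ (σ X) = X)
    (hσB : ∀ X Y : g, B (σ X) (σ Y) = B X Y)
    (l : LieSubalgebra ℝ g)
    (X Y Z : g)
    (hXl : X ∈ l) (hXν : ∀ W ∈ l, B (σ X) W = 0 * B X W)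
    (hYl : Y ∈ l) (hYν : ∀ W ∈ l, B (σ Y) W = (-1) * B Y W)
    (hZl : Z ∈ l) (hZν : ∀ W ∈ l, B (σ Z) W = 0 * B Z W) :
    B ⁅((((1 - 0) / 2 : ℝ) ^ (-(1/2) : ℝ) / 2 : ℝ)) • (X + σ X),
        ((((1 - (-1)) / 2 : ℝ) ^ (-(1/2) : ℝ) / 2 : ℝ)) • (Y - σ Y)⁆
      (((((1 - 0) / 2 : ℝ) ^ (-(1/2) : ℝ) / 2 : ℝ)) • (Z - σ Z))
    = B ⁅X, Y⁆ Z :=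
  statement12_general B hBsymm hBinv σ hσbr hσinv hσB l X Y Z hXl hXν hYl hYν hZl hZν
end

section
/- Let z₁,…,z_q and t₁,…,t_p be vectors in g that are pairwise orthogonal with ⟨z_r,z_r⟩ = −1 and ⟨t_k,t_k⟩ = 1, spanning a subspace V on which ⟨·,·⟩ is nondegenerate, and assume ⟨[z_r,z_s],z_u⟩ = 0, ⟨[z_r,z_s],t_k⟩ = 0 and ⟨[t_k,t_i],t_j⟩ = 0 for all indices. Let c ∈ C(V) be the Clifford image of the 3-form (X,Y,Z) ↦ ⟨[X,Y],Z⟩, i.e. c = Σ_{a<b<c} ε_a ε_b ε_c ⟨[e_a,e_b],e_c⟩ e_a e_b e_c, where (e_1,…,e_{q+p}) = (z_1,…,z_q,t_1,…,t_p) is the combined orthonormal basis and ε_a = ⟨e_a,e_a⟩. Then c = −Σ_r Σ_{k<i} ⟨[t_k, z_r], t_i⟩ t_k z_r t_i. -/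
/-!
In the orthonormal basis `z₁, …, z_q, t₁, …, t_p` every `z` precedes every `t`, so a strictly
increasing triple of indices has type `zzz`, `zzt`, `ztt` or `ttt`. The hypotheses kill the
structure constants of types `zzz`, `zzt` and `ttt`, leaving the terms
`ε_z ε_t ε_t ⟨[z_r, t_k], t_i⟩ z_r t_k t_i = -⟨[z_r, t_k], t_i⟩ z_r t_k t_i`. Since `t_k ⟂ z_r`,
their Clifford images anticommute, and together with `[z_r, t_k] = -[t_k, z_r]` this gives the
stated form.
-/

open CliffordAlgebra

namespace Fin

variable {M : Type*} [AddCommMonoid M] {q p : ℕ}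

theorem sum_Ioi_castAdd (r : Fin q) (f : Fin (q + p) → M) :
    ∑ b ∈ Finset.Ioi (castAdd p r), f b =
      ∑ s ∈ Finset.Ioi r, f (castAdd p s) + ∑ k, f (natAdd q k) := by
  have castAdd_lt_iff (s : Fin q) : castAdd p r < castAdd p s ↔ r < s := by
    simp only [lt_def, val_castAdd]
  have lt_natAdd (k : Fin p) : castAdd p r < natAdd q k := by
    simp only [lt_def, val_castAdd, val_natAdd]; omega
  simp only [← Finset.filter_lt_eq_Ioi, Finset.sum_filter, sum_univ_add, castAdd_lt_iff,
    lt_natAdd, if_true]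

theorem sum_Ioi_natAdd (k : Fin p) (f : Fin (q + p) → M) :
    ∑ b ∈ Finset.Ioi (natAdd q k), f b = ∑ i ∈ Finset.Ioi k, f (natAdd q i) := by
  have not_lt_castAdd (r : Fin q) : ¬ natAdd q k < castAdd p r := by
    simp only [lt_def, val_castAdd, val_natAdd]; omega
  simp only [← Finset.filter_lt_eq_Ioi, Finset.sum_filter, sum_univ_add, natAdd_lt_natAdd_iff,
    not_lt_castAdd, if_false, Finset.sum_const_zero, zero_add]

end Fin

theorem QuadraticMap.isOrtho_of_half_bilinForm {K M : Type*} [Field K] [AddCommGroup M]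
    [Module K M] {B : LinearMap.BilinForm K M} (hB : B.IsSymm) {V : Submodule K M}
    {Q : QuadraticForm K V}
    (hQ : ∀ v : V, Q v = B (v : M) (v : M) / 2) {v w : V} (hvw : B (v : M) (w : M) = 0) :
    Q.IsOrtho v w := by
  have hwv : B (w : M) (v : M) = 0 := by rw [← hB.eq, hvw]
  rw [QuadraticMap.isOrtho_def, hQ, hQ, hQ, Submodule.coe_add]
  simp only [map_add, LinearMap.add_apply, hvw, hwv]
  ring

theorem statement16_general
    {g : Type*} [LieRing g] [LieAlgebra ℝ g]
    (B : LinearMap.BilinForm ℝ g)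
    (hBsymm : ∀ X Y : g, B X Y = B Y X)
    {q p : ℕ} (z : Fin q → g) (t : Fin p → g)
    (htz : ∀ (k : Fin p) (r : Fin q), B (t k) (z r) = 0)
    (hnz : ∀ r : Fin q, B (z r) (z r) = -1)
    (hnt : ∀ k : Fin p, B (t k) (t k) = 1)
    (hzzz : ∀ r s u : Fin q, B ⁅z r, z s⁆ (z u) = 0)
    (hzzt : ∀ (r s : Fin q) (k : Fin p), B ⁅z r, z s⁆ (t k) = 0)
    (httt : ∀ k i j : Fin p, B ⁅t k, t i⁆ (t j) = 0)
    (V : Submodule ℝ g)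
    (Q : QuadraticForm ℝ V)
    (hQ : ∀ v : V, Q v = B (v : g) (v : g) / 2)
    (htV : ∀ k : Fin p, t k ∈ V)
    (hzV : ∀ r : Fin q, z r ∈ V)
    (heV : ∀ a : Fin (q + p), Fin.append z t a ∈ V)
    (c : CliffordAlgebra Q)
    (hc : c = ∑ a : Fin (q + p), ∑ b ∈ Finset.Ioi a, ∑ d ∈ Finset.Ioi b,
      (B (Fin.append z t a) (Fin.append z t a) * B (Fin.append z t b) (Fin.append z t b)
        * B (Fin.append z t d) (Fin.append z t d)
        * B ⁅Fin.append z t a, Fin.append z t b⁆ (Fin.append z t d)) •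
      (ι Q ⟨Fin.append z t a, heV a⟩ * ι Q ⟨Fin.append z t b, heV b⟩ *
        ι Q ⟨Fin.append z t d, heV d⟩)) :
    c = - ∑ r : Fin q, ∑ k : Fin p, ∑ i ∈ Finset.Ioi k,
      B ⁅t k, z r⁆ (t i) •
        (ι Q ⟨t k, htV k⟩ * ι Q ⟨z r, hzV r⟩ * ι Q ⟨t i, htV i⟩) := by
  have hanti (k : Fin p) (r : Fin q) :
      ι Q ⟨t k, htV k⟩ * ι Q ⟨z r, hzV r⟩ = -(ι Q ⟨z r, hzV r⟩ * ι Q ⟨t k, htV k⟩) :=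
    ι_mul_ι_comm_of_isOrtho
      (QuadraticMap.isOrtho_of_half_bilinForm ⟨hBsymm⟩ hQ (htz k r))
  have hc_ztt : c = ∑ r : Fin q, ∑ k : Fin p, ∑ i ∈ Finset.Ioi k,
      (-B ⁅z r, t k⁆ (t i)) • (ι Q ⟨z r, hzV r⟩ * ι Q ⟨t k, htV k⟩ * ι Q ⟨t i, htV i⟩) := by
    simp only [hc, Fin.sum_univ_add, Fin.sum_Ioi_castAdd, Fin.sum_Ioi_natAdd, Fin.append_left,
      Fin.append_right, hzzz, hzzt, httt, hnz, hnt, mul_zero, zero_smul, Finset.sum_const_zero,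
      zero_add, add_zero, neg_one_mul, one_mul, mul_one]
  rw [hc_ztt]
  have hskew (r : Fin q) (k i : Fin p) : B ⁅t k, z r⁆ (t i) = -B ⁅z r, t k⁆ (t i) := by
    rw [← lie_skew, map_neg, LinearMap.neg_apply]
  simp only [← Finset.sum_neg_distrib, hskew, hanti, neg_mul, smul_neg, neg_smul, neg_neg]

/-- Let `z₁,…,z_q` and `t₁,…,t_p` be pairwise orthogonal vectors in `g` with
`⟨z_r,z_r⟩ = −1` and `⟨t_k,t_k⟩ = 1`, spanning a subspace `V` on which `⟨·,·⟩` is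
nondegenerate, and assume `⟨[z_r,z_s],z_u⟩ = 0`, `⟨[z_r,z_s],t_k⟩ = 0` and
`⟨[t_k,t_i],t_j⟩ = 0` for all indices. Let `c ∈ C(V)` be the Clifford image of the 3-form
`(X,Y,Z) ↦ ⟨[X,Y],Z⟩`, i.e. `c = Σ_{a<b<d} ε_a ε_b ε_d ⟨[e_a,e_b],e_d⟩ e_a e_b e_d` for the
combined orthonormal basis `(e) = (z_1,…,z_q,t_1,…,t_p)`. Then
`c = −Σ_r Σ_{k<i} ⟨[t_k, z_r], t_i⟩ t_k z_r t_i`. -/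
theorem statement16
    {g : Type*} [LieRing g] [LieAlgebra ℝ g] [FiniteDimensional ℝ g]
    (B : LinearMap.BilinForm ℝ g)
    (hBsymm : ∀ X Y : g, B X Y = B Y X)
    (hBinv : ∀ X Y Z : g, B ⁅X, Y⁆ Z = - B Y ⁅X, Z⁆)
    {q p : ℕ} (z : Fin q → g) (t : Fin p → g)
    (hzz : ∀ r s : Fin q, r ≠ s → B (z r) (z s) = 0)
    (htt : ∀ k i : Fin p, k ≠ i → B (t k) (t i) = 0)
    (htz : ∀ (k : Fin p) (r : Fin q), B (t k) (z r) = 0)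
    (hnz : ∀ r : Fin q, B (z r) (z r) = -1)
    (hnt : ∀ k : Fin p, B (t k) (t k) = 1)
    (hzzz : ∀ r s u : Fin q, B ⁅z r, z s⁆ (z u) = 0)
    (hzzt : ∀ (r s : Fin q) (k : Fin p), B ⁅z r, z s⁆ (t k) = 0)
    (httt : ∀ k i j : Fin p, B ⁅t k, t i⁆ (t j) = 0)
    (V : Submodule ℝ g)
    (hV : V = Submodule.span ℝ (Set.range z ∪ Set.range t))
    (hVnd : ∀ v ∈ V, (∀ w ∈ V, B v w = 0) → v = 0)
    (Q : QuadraticForm ℝ V)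
    (hQ : ∀ v : V, Q v = B (v : g) (v : g) / 2)
    (htV : ∀ k : Fin p, t k ∈ V)
    (hzV : ∀ r : Fin q, z r ∈ V)
    (heV : ∀ a : Fin (q + p), Fin.append z t a ∈ V)
    (c : CliffordAlgebra Q)
    (hc : c = ∑ a : Fin (q + p), ∑ b ∈ Finset.Ioi a, ∑ d ∈ Finset.Ioi b,
      (B (Fin.append z t a) (Fin.append z t a) * B (Fin.append z t b) (Fin.append z t b)
        * B (Fin.append z t d) (Fin.append z t d)
        * B ⁅Fin.append z t a, Fin.append z t b⁆ (Fin.append z t d)) •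
      (ι Q ⟨Fin.append z t a, heV a⟩ * ι Q ⟨Fin.append z t b, heV b⟩ *
        ι Q ⟨Fin.append z t d, heV d⟩)) :
    c = - ∑ r : Fin q, ∑ k : Fin p, ∑ i ∈ Finset.Ioi k,
      B ⁅t k, z r⁆ (t i) •
        (ι Q ⟨t k, htV k⟩ * ι Q ⟨z r, hzV r⟩ * ι Q ⟨t i, htV i⟩) :=
  statement16_general B hBsymm z t htz hnz hnt hzzz hzzt httt V Q hQ htV hzV heV c hc
end

section
/- Assume ⟨·,·⟩ restricted to l∩h is nondegenerate and g = h + l (every element of g is a sum of an element of h and an element of l). Let q_l := {X ∈ l : ⟨X, Y⟩ = 0 for all Y ∈ l∩h}. Then the map p⁻ : q_l → q defined by p⁻(X) = (X − σX)/2 is a linear isomorphism of q_l onto q. -/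
/-! Write `S = l ∩ h`. Since `⟨·,·⟩` is nondegenerate on `S`, every `X ∈ g` has a component
`C ∈ S` with `X - C ⊥ S`. Given `W ∈ q`, split `W = A + X` with `A ∈ h`, `X ∈ l`; then
`p⁻(X - C) = p⁻(X) = p⁻(W) = W`, and `X - C ∈ q_l`. Injectivity: if `p⁻(X) = p⁻(X')` for
`X, X' ∈ q_l`, then `X - X'` is `σ`-fixed, so it lies in `S` and is orthogonal to `S`, hence zero. -/

section

variable {K V : Type*} [Field K] [AddCommGroup V] [Module K V]

theorem LinearMap.BilinForm.exists_mem_forall_apply_eq [FiniteDimensional K V]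
    (B : LinearMap.BilinForm K V) (S : Submodule K V)
    (hS : ∀ X ∈ S, (∀ Y ∈ S, B X Y = 0) → X = 0) (X : V) :
    ∃ C ∈ S, ∀ Y ∈ S, B C Y = B X Y := by
  have hBS : (B.restrict S).Nondegenerate :=
    .ofSeparatingLeft fun x hx ↦ Subtype.ext <| hS x x.2 fun Y hY ↦ hx ⟨Y, hY⟩
  set C : S := ((B.restrict S).toDual hBS).symm ((B X).comp S.subtype)
  exact ⟨C, C.2, fun Y hY ↦ apply_toDual_symm_apply (B := B.restrict S) _ ⟨Y, hY⟩⟩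

variable {σ : V →ₗ[K] V}

theorem apply_sub_apply_eq_neg_of_involutive (hσ : ∀ X, σ (σ X) = X) (X : V) :
    σ (X - σ X) = -(X - σ X) := by
  rw [map_sub, hσ, neg_sub]

variable (B : LinearMap.BilinForm K V) (L : Submodule K V)

theorem eq_of_sub_apply_eq_of_forall_apply_eq_zero
    (hnd : ∀ X ∈ L, σ X = X → (∀ Y ∈ L, σ Y = Y → B X Y = 0) → X = 0)
    {X X' : V} (hX : X ∈ L ∧ ∀ Y ∈ L, σ Y = Y → B X Y = 0)
    (hX' : X' ∈ L ∧ ∀ Y ∈ L, σ Y = Y → B X' Y = 0)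
    (h : X - σ X = X' - σ X') : X = X' := by
  have hfix : σ (X - X') = X - X' := by
    rw [map_sub, ← sub_eq_sub_iff_sub_eq_sub.mp h]
  refine sub_eq_zero.mp <| hnd _ (L.sub_mem hX.1 hX'.1) hfix fun Y hY hσY ↦ ?_
  rw [map_sub, LinearMap.sub_apply, hX.2 Y hY hσY, hX'.2 Y hY hσY, sub_zero]

theorem exists_sub_apply_eq_two_smul [FiniteDimensional K V]
    (hnd : ∀ X ∈ L, σ X = X → (∀ Y ∈ L, σ Y = Y → B X Y = 0) → X = 0)
    {W A X : V} (hW : σ W = -W) (hA : σ A = A) (hX : X ∈ L) (hWAX : W = A + X) :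
    ∃ X' : V, (X' ∈ L ∧ ∀ Y ∈ L, σ Y = Y → B X' Y = 0) ∧ X' - σ X' = 2 • W := by
  set S : Submodule K V := L ⊓ LinearMap.ker (σ - LinearMap.id)
  have hmemS : ∀ Z, Z ∈ S ↔ Z ∈ L ∧ σ Z = Z := by
    simp [S, sub_eq_zero]
  obtain ⟨C, hCS, hC⟩ := B.exists_mem_forall_apply_eq S
    (fun Z hZ hZS ↦ hnd Z ((hmemS Z).1 hZ).1 ((hmemS Z).1 hZ).2
      fun Y hY hσY ↦ hZS Y ((hmemS Y).2 ⟨hY, hσY⟩)) X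
  obtain ⟨hCL, hσC⟩ := (hmemS C).1 hCS
  refine ⟨X - C, ⟨L.sub_mem hX hCL, fun Y hY hσY ↦ ?_⟩, ?_⟩
  · rw [map_sub, LinearMap.sub_apply, hC Y ((hmemS Y).2 ⟨hY, hσY⟩), sub_self]
  · have hσX : σ X = -W - A := by
      rw [eq_sub_of_add_eq' hWAX.symm, map_sub, hW, hA]
    rw [map_sub, hσC, hσX, eq_sub_of_add_eq' hWAX.symm]
    abel

end

theorem statement18_general
    {g : Type*} [LieRing g] [LieAlgebra ℝ g] [FiniteDimensional ℝ g]
    (B : LinearMap.BilinForm ℝ g)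
    (σ : g →ₗ[ℝ] g)
    (hσinv : ∀ X : g, σ (σ X) = X)
    (l : LieSubalgebra ℝ g)
    (hnd : ∀ X : g, X ∈ l → σ X = X →
      (∀ Y : g, Y ∈ l → σ Y = Y → B X Y = 0) → X = 0)
    (hdec : ∀ W : g, ∃ A X : g, σ A = A ∧ X ∈ l ∧ W = A + X) :
    (∀ X : g, (X ∈ l ∧ ∀ Y : g, Y ∈ l → σ Y = Y → B X Y = 0) →
      σ ((1/2 : ℝ) • (X - σ X)) = -((1/2 : ℝ) • (X - σ X))) ∧
    (∀ X X' : g,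
      (X ∈ l ∧ ∀ Y : g, Y ∈ l → σ Y = Y → B X Y = 0) →
      (X' ∈ l ∧ ∀ Y : g, Y ∈ l → σ Y = Y → B X' Y = 0) →
      (1/2 : ℝ) • (X - σ X) = (1/2 : ℝ) • (X' - σ X') → X = X') ∧
    (∀ W : g, σ W = -W →
      ∃ X : g, (X ∈ l ∧ ∀ Y : g, Y ∈ l → σ Y = Y → B X Y = 0) ∧
        (1/2 : ℝ) • (X - σ X) = W) := by
  refine ⟨fun X _ ↦ ?_, fun X X' hX hX' h ↦ ?_, fun W hW ↦ ?_⟩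
  · rw [map_smul, apply_sub_apply_eq_neg_of_involutive hσinv, smul_neg]
  · exact eq_of_sub_apply_eq_of_forall_apply_eq_zero B l.toSubmodule hnd hX hX'
      (smul_right_injective g (by norm_num : (1/2 : ℝ) ≠ 0) h)
  · obtain ⟨A, X, hA, hX, hWAX⟩ := hdec W
    obtain ⟨X', hX', hσX'⟩ :=
      exists_sub_apply_eq_two_smul B l.toSubmodule hnd hW hA hX hWAX
    refine ⟨X', hX', ?_⟩
    rw [hσX', ← Nat.cast_smul_eq_nsmul ℝ, smul_smul]
    norm_num

/-- Assume `⟨·,·⟩` restricted to `l∩h` is nondegenerate and `g = h + l`.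
With `q_l = {X ∈ l : ⟨X,Y⟩ = 0 for all Y ∈ l∩h}`, the map `p⁻ : q_l → q`,
`p⁻(X) = (X − σX)/2`, is a linear isomorphism of `q_l` onto `q = {X : σX = −X}`
(here `h = {X : σX = X}`): it maps `q_l` into `q`, is injective on `q_l`, and is onto `q`. -/
theorem statement18
    {g : Type*} [LieRing g] [LieAlgebra ℝ g] [FiniteDimensional ℝ g]
    (B : LinearMap.BilinForm ℝ g)
    (hBsymm : ∀ X Y : g, B X Y = B Y X)
    (hBinv : ∀ X Y Z : g, B ⁅X, Y⁆ Z = - B Y ⁅X, Z⁆)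
    (σ : g →ₗ[ℝ] g)
    (hσbr : ∀ X Y : g, σ ⁅X, Y⁆ = ⁅σ X, σ Y⁆)
    (hσinv : ∀ X : g, σ (σ X) = X)
    (hσB : ∀ X Y : g, B (σ X) (σ Y) = B X Y)
    (l : LieSubalgebra ℝ g)
    (hnd : ∀ X : g, X ∈ l → σ X = X →
      (∀ Y : g, Y ∈ l → σ Y = Y → B X Y = 0) → X = 0)
    (hdec : ∀ W : g, ∃ A X : g, σ A = A ∧ X ∈ l ∧ W = A + X) :
    (∀ X : g, (X ∈ l ∧ ∀ Y : g, Y ∈ l → σ Y = Y → B X Y = 0) →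
      σ ((1/2 : ℝ) • (X - σ X)) = -((1/2 : ℝ) • (X - σ X))) ∧
    (∀ X X' : g,
      (X ∈ l ∧ ∀ Y : g, Y ∈ l → σ Y = Y → B X Y = 0) →
      (X' ∈ l ∧ ∀ Y : g, Y ∈ l → σ Y = Y → B X' Y = 0) →
      (1/2 : ℝ) • (X - σ X) = (1/2 : ℝ) • (X' - σ X') → X = X') ∧
    (∀ W : g, σ W = -W →
      ∃ X : g, (X ∈ l ∧ ∀ Y : g, Y ∈ l → σ Y = Y → B X Y = 0) ∧
        (1/2 : ℝ) • (X - σ X) = W) :=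
  statement18_general B σ hσinv l hnd hdec
end

section
/- Assume ⟨·,·⟩ is nondegenerate on g and g = l + σ(l) (every element of g is of the form Y + σ(Z) with Y, Z ∈ l). Then l(1) = l∩h and l(−1) = l∩q. -/
/-!
For `ν² = 1`, the vector `W = σX - νX` satisfies `σW = -νW`. If `⟨σX, ·⟩ = ν⟨X, ·⟩` on `l`, then
`W ⟂ l`, and `⟨W, σZ⟩ = ⟨σW, Z⟩ = -ν⟨W, Z⟩ = 0` shows `W ⟂ σ(l)` as well. Since `g = l + σ(l)`
and the form is nondegenerate, `W = 0`, i.e. `σX = νX`.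
-/

section Involution

variable {R M : Type*} [CommRing R] [AddCommGroup M] [Module R M]

lemma LinearMap.map_sub_smul_eq_neg_smul_of_involutive {σ : M →ₗ[R] M}
    (hσ : ∀ X, σ (σ X) = X) {ν : R} (hν : ν * ν = 1) (X : M) :
    σ (σ X - ν • X) = -ν • (σ X - ν • X) := by
  rw [map_sub, map_smul, hσ, smul_sub, smul_smul, neg_mul, hν, neg_smul, neg_smul, one_smul,
    sub_neg_eq_add, add_comm, sub_eq_add_neg]

lemma LinearMap.BilinForm.eq_smul_of_apply_map_eq_smul {B : LinearMap.BilinForm R M}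
    {σ : M →ₗ[R] M} {L : Set M} (hσ : ∀ X, σ (σ X) = X) (hσB : ∀ X Y, B (σ X) (σ Y) = B X Y)
    (hB : B.SeparatingLeft) (hL : ∀ X, ∃ Y ∈ L, ∃ Z ∈ L, X = Y + σ Z)
    {ν : R} (hν : ν * ν = 1) {X : M} (hX : ∀ Y ∈ L, B (σ X) Y = ν * B X Y) :
    σ X = ν • X := by
  set W := σ X - ν • X with hW
  have orthogonal_L : ∀ Y ∈ L, B W Y = 0 := fun Y hY => by
    simp only [hW, map_sub, map_smul, LinearMap.sub_apply, LinearMap.smul_apply, smul_eq_mul,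
      hX Y hY, sub_self]
  have orthogonal_σL : ∀ Z ∈ L, B W (σ Z) = 0 := fun Z hZ => by
    rw [← hσB, LinearMap.map_sub_smul_eq_neg_smul_of_involutive hσ hν, hσ, map_smul,
      LinearMap.smul_apply, orthogonal_L Z hZ, smul_zero]
  have hW0 : W = 0 := hB W fun U => by
    obtain ⟨Y, hY, Z, hZ, rfl⟩ := hL U
    rw [map_add, orthogonal_L Y hY, orthogonal_σL Z hZ, add_zero]
  exact sub_eq_zero.mp hW0

lemma LinearMap.BilinForm.apply_map_eq_smul_iff {B : LinearMap.BilinForm R M}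
    {σ : M →ₗ[R] M} {L : Set M} (hσ : ∀ X, σ (σ X) = X) (hσB : ∀ X Y, B (σ X) (σ Y) = B X Y)
    (hB : B.SeparatingLeft) (hL : ∀ X, ∃ Y ∈ L, ∃ Z ∈ L, X = Y + σ Z)
    {ν : R} (hν : ν * ν = 1) (X : M) :
    (∀ Y ∈ L, B (σ X) Y = ν * B X Y) ↔ σ X = ν • X :=
  ⟨B.eq_smul_of_apply_map_eq_smul hσ hσB hB hL hν, fun h Y _ => by
    rw [h, map_smul, LinearMap.smul_apply, smul_eq_mul]⟩

end Involution

theorem statement19_general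
    {g : Type*} [LieRing g] [LieAlgebra ℝ g]
    (B : LinearMap.BilinForm ℝ g)
    (σ : g →ₗ[ℝ] g)
    (hσinv : ∀ X : g, σ (σ X) = X)
    (hσB : ∀ X Y : g, B (σ X) (σ Y) = B X Y)
    (l : LieSubalgebra ℝ g)
    (hBnondeg : ∀ X : g, (∀ Y : g, B X Y = 0) → X = 0)
    (hdec : ∀ X : g, ∃ Y ∈ l, ∃ Z ∈ l, X = Y + σ Z) :
    (∀ X : g, (X ∈ l ∧ ∀ Y ∈ l, B (σ X) Y = 1 * B X Y) ↔ (X ∈ l ∧ σ X = X)) ∧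
    (∀ X : g, (X ∈ l ∧ ∀ Y ∈ l, B (σ X) Y = (-1) * B X Y) ↔ (X ∈ l ∧ σ X = -X)) := by
  have eigen_iff (ν : ℝ) (hν : ν * ν = 1) (X : g) :=
    B.apply_map_eq_smul_iff (L := l) hσinv hσB hBnondeg hdec hν X
  refine ⟨fun X => and_congr_right fun _ => ?_, fun X => and_congr_right fun _ => ?_⟩
  · simpa using eigen_iff 1 (by norm_num) X
  · simpa using eigen_iff (-1) (by norm_num) X

/-- Assume `⟨·,·⟩` is nondegenerate on `g` and `g = l + σ(l)`.
Then `l(1) = l∩h` and `l(−1) = l∩q`, where `h = {X : σX = X}` and `q = {X : σX = −X}`. -/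
theorem statement19
    {g : Type*} [LieRing g] [LieAlgebra ℝ g] [FiniteDimensional ℝ g]
    (B : LinearMap.BilinForm ℝ g)
    (hBsymm : ∀ X Y : g, B X Y = B Y X)
    (hBinv : ∀ X Y Z : g, B ⁅X, Y⁆ Z = - B Y ⁅X, Z⁆)
    (σ : g →ₗ[ℝ] g)
    (hσbr : ∀ X Y : g, σ ⁅X, Y⁆ = ⁅σ X, σ Y⁆)
    (hσinv : ∀ X : g, σ (σ X) = X)
    (hσB : ∀ X Y : g, B (σ X) (σ Y) = B X Y)
    (l : LieSubalgebra ℝ g)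
    (hBnondeg : ∀ X : g, (∀ Y : g, B X Y = 0) → X = 0)
    (hdec : ∀ X : g, ∃ Y ∈ l, ∃ Z ∈ l, X = Y + σ Z) :
    (∀ X : g, (X ∈ l ∧ ∀ Y ∈ l, B (σ X) Y = 1 * B X Y) ↔ (X ∈ l ∧ σ X = X)) ∧
    (∀ X : g, (X ∈ l ∧ ∀ Y ∈ l, B (σ X) Y = (-1) * B X Y) ↔ (X ∈ l ∧ σ X = -X)) :=
  statement19_general B σ hσinv hσB l hBnondeg hdec
end
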